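/- Let I be an SPA-ST instance and consider the IP model J with binary variables x_{ij} for each student s_i and project p_j, and binary variables α_{ij}, β_{ij}, subject to: (1) x_{ij}=0 if p_j is unacceptable to s_i; (2) Σ_j x_{ij} ≤ 1 for each s_i; (3) Σ_i x_{ij} ≤ c_j for each p_j; (4) Σ_i Σ_{p_j∈P_k} x_{ij} ≤ d_k for each l_k; (5) 1 − Σ_{p_r∈S_{ij}} x_{ir} ≤ α_{ij} + β_{ij}; (6) Σ_{s_u∈T_{ik}} Σ_{p_r∈P_k} x_{ur} ≥ d_k·α_{ij}; (7) Σ_{s_u∈T_{ijk}} x_{uj} ≥ c_j·β_{ij}. Then the feasible solutions of J (projected to x) are exactly the stable matchings of I, i.e. M = {(s_i,p_j) : x_{ij}=1} is a stable matching iff some (α,β) makes (x,α,β) feasible. -/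

import Mathlib

open scoped Classical
open Finset

/-- An instance of the Student-Project Allocation problem with lecturer
preferences over students, with ties (SPA-ST).  Preferences are encoded by
rank functions: a lower rank means more preferred; equal ranks encode ties. -/
structure SPAST (S P L : Type) where
  /-- the lecturer offering each project -/
  lec : P → L
  /-- project capacities -/
  cap : P → ℕ
  /-- lecturer capacities -/
  dcap : L → ℕ
  /-- `acc s p` iff student `s` finds project `p` acceptable -/
  acc : S → P → Prop
  /-- student rank function (lower is better); meaningful on acceptable projects -/
  sRank : S → P → ℕ
  /-- lecturer rank function over students (lower is better) -/
  lRank : L → S → ℕ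

variable {S P L : Type}

/-- students assigned to a project in `M` -/
noncomputable def projAssignees [Fintype S] (M : S → Option P) (p : P) : Finset S :=
  Finset.univ.filter (fun s => M s = some p)

/-- students assigned to some project of lecturer `k` in `M` -/
noncomputable def lecAssignees [Fintype S] (I : SPAST S P L) (M : S → Option P) (k : L) :
    Finset S :=
  Finset.univ.filter (fun s => ∃ p, M s = some p ∧ I.lec p = k)

def IsMatching [Fintype S] (I : SPAST S P L) (M : S → Option P) : Prop :=
  (∀ s p, M s = some p → I.acc s p) ∧
  (∀ p, (projAssignees M p).card ≤ I.cap p) ∧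
  (∀ k, (lecAssignees I M k).card ≤ I.dcap k)

def ProjFull [Fintype S] (I : SPAST S P L) (M : S → Option P) (p : P) : Prop :=
  (projAssignees M p).card = I.cap p

def LecFull [Fintype S] (I : SPAST S P L) (M : S → Option P) (k : L) : Prop :=
  (lecAssignees I M k).card = I.dcap k

/-- `s` finds `p` acceptable and is unassigned or strictly prefers `p` to `M(s)`. -/
def WantsToMove (I : SPAST S P L) (M : S → Option P) (s : S) (p : P) : Prop :=
  I.acc s p ∧ (M s = none ∨ ∃ p', M s = some p' ∧ I.sRank s p < I.sRank s p')

/-- `(s, p)` is a blocking pair of `M`. -/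
def Blocks [Fintype S] (I : SPAST S P L) (M : S → Option P) (s : S) (p : P) : Prop :=
  WantsToMove I M s p ∧
  ( (¬ ProjFull I M p ∧ ¬ LecFull I M (I.lec p)) ∨
    (¬ ProjFull I M p ∧ LecFull I M (I.lec p) ∧
      (s ∈ lecAssignees I M (I.lec p) ∨
       ∃ s' ∈ lecAssignees I M (I.lec p), I.lRank (I.lec p) s < I.lRank (I.lec p) s')) ∨
    (ProjFull I M p ∧
       ∃ s' ∈ projAssignees M p, I.lRank (I.lec p) s < I.lRank (I.lec p) s') )

def Stable [Fintype S] (I : SPAST S P L) (M : S → Option P) : Prop :=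
  IsMatching I M ∧ ∀ s p, ¬ Blocks I M s p

/-- the number of assigned agents in a matching -/
noncomputable def msize {A B : Type} [Fintype A] (M : A → Option B) : ℕ :=
  (Finset.univ.filter (fun a => (M a).isSome)).card

/-- Feasibility of `(x, a, b)` in the IP model `J` for MAX-SPA-ST: all variables
are binary, unacceptable pairs are forced to `0` (constraint 1), each student is
assigned at most once (2), project and lecturer capacities hold (3)–(4), and the
stability constraints (5)–(7) hold, where `S_{ij}` is the set of projects ranked
by `s_i` at least as highly as `p_j`, `T_{ik}` the set of students other than
`s_i` ranked by `l_k` at least as highly as `s_i`, and `T_{ijk}` its subset of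
students finding `p_j` acceptable. -/
def Feasible [Fintype S] [Fintype P] (I : SPAST S P L) (x a b : S → P → ℤ) : Prop :=
  (∀ s p, x s p = 0 ∨ x s p = 1) ∧
  (∀ s p, a s p = 0 ∨ a s p = 1) ∧
  (∀ s p, b s p = 0 ∨ b s p = 1) ∧
  -- (1)
  (∀ s p, ¬ I.acc s p → x s p = 0) ∧
  -- (2)
  (∀ s, ∑ p, x s p ≤ 1) ∧
  -- (3)
  (∀ p, ∑ s, x s p ≤ (I.cap p : ℤ)) ∧
  -- (4)
  (∀ k, ∑ s, ∑ p ∈ Finset.univ.filter (fun p => I.lec p = k), x s p ≤ (I.dcap k : ℤ)) ∧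
  -- (5)
  (∀ s p, I.acc s p →
    1 - ∑ r ∈ Finset.univ.filter (fun r => I.acc s r ∧ I.sRank s r ≤ I.sRank s p), x s r
      ≤ a s p + b s p) ∧
  -- (6)
  (∀ s p, I.acc s p →
    ∑ u ∈ Finset.univ.filter
        (fun u => I.lRank (I.lec p) u ≤ I.lRank (I.lec p) s ∧ u ≠ s),
      ∑ r ∈ Finset.univ.filter (fun r => I.lec r = I.lec p), x u r
      ≥ (I.dcap (I.lec p) : ℤ) * a s p) ∧
  -- (7)
  (∀ s p, I.acc s p →
    ∑ u ∈ Finset.univ.filter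
        (fun u => I.lRank (I.lec p) u ≤ I.lRank (I.lec p) s ∧ u ≠ s ∧ I.acc u p),
      x u p ≥ (I.cap p : ℤ) * b s p)

/-!
Take `α_{ij}` (resp. `β_{ij}`) to be the indicator that the lecturer `l_k` of `p_j` (resp. the
project `p_j`) is full and all its assignees lie in `T_{ik}` (resp. `T_{ijk}`). Since the
capacities bound the number of assignees, constraint (6) (resp. (7)) with `α_{ij} = 1`
(resp. `β_{ij} = 1`) is equivalent to exactly this property. Constraint (5) demands one of
them whenever `s_i` would rather have `p_j`, and for such a pair "`(s_i, p_j)` does not block"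
is precisely the disjunction of the two properties.
-/

theorem Finset.le_card_inter_iff {α : Type*} [DecidableEq α] {A B : Finset α} {c : ℕ}
    (hA : #A ≤ c) : c ≤ #(A ∩ B) ↔ #A = c ∧ A ⊆ B := by
  refine ⟨fun h => ?_, fun ⟨hc, hAB⟩ => by rw [inter_eq_left.mpr hAB, hc]⟩
  have hcard : #(A ∩ B) ≤ #A := card_le_card inter_subset_left
  exact ⟨by omega, inter_eq_left.mp (eq_of_subset_of_card_le inter_subset_left (by omega))⟩

namespace SPAST

variable [Fintype S] (I : SPAST S P L)

/-- `S_{ij}` -/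
noncomputable def projsAtLeast [Fintype P] (s : S) (p : P) : Finset P :=
  univ.filter fun r => I.acc s r ∧ I.sRank s r ≤ I.sRank s p

/-- `T_{ik}` -/
noncomputable def rivals (k : L) (s : S) : Finset S :=
  univ.filter fun u => I.lRank k u ≤ I.lRank k s ∧ u ≠ s

/-- `T_{ijk}` -/
noncomputable def projRivals (p : P) (s : S) : Finset S :=
  univ.filter fun u => I.lRank (I.lec p) u ≤ I.lRank (I.lec p) s ∧ u ≠ s ∧ I.acc u p

end SPAST

/-- The variables `x_{ij}` encoding the matching `M`. -/
noncomputable def matchVars (M : S → Option P) (s : S) (p : P) : ℤ :=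
  if M s = some p then 1 else 0

section matchVars

variable (M : S → Option P)

theorem matchVars_nonneg (s : S) (p : P) : 0 ≤ matchVars M s p := by
  unfold matchVars; split <;> norm_num

theorem sum_matchVars_student (T : Finset P) (s : S) :
    ∑ r ∈ T, matchVars M s r = if ∃ r ∈ T, M s = some r then 1 else 0 := by
  cases h : M s <;> simp [matchVars, h]

theorem sum_matchVars_project [Fintype S] (U : Finset S) (p : P) :
    ∑ u ∈ U, matchVars M u p = #(projAssignees M p ∩ U) := by
  rw [projAssignees, filter_inter, univ_inter]
  exact sum_boole _ _

theorem sum_matchVars_lecturer [Fintype S] [Fintype P] (I : SPAST S P L) (U : Finset S) (k : L) :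
    ∑ u ∈ U, ∑ r ∈ univ.filter (fun r => I.lec r = k), matchVars M u r
      = #(lecAssignees I M k ∩ U) := by
  rw [lecAssignees, filter_inter, univ_inter, ← sum_boole]
  refine sum_congr rfl fun u _ => ?_
  rw [sum_matchVars_student]
  simp only [mem_filter, mem_univ, true_and]
  congr 1
  exact propext ⟨fun ⟨r, hr, hu⟩ => ⟨r, hu, hr⟩, fun ⟨r, hu, hr⟩ => ⟨r, hr, hu⟩⟩

theorem sum_projsAtLeast_eq_zero_iff [Fintype P] {I : SPAST S P L}
    (hacc : ∀ s p, M s = some p → I.acc s p) {s : S} {p : P}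
    (hsp : I.acc s p) :
    ∑ r ∈ I.projsAtLeast s p, matchVars M s r = 0 ↔ WantsToMove I M s p := by
  rw [sum_matchVars_student]
  simp only [SPAST.projsAtLeast, WantsToMove, hsp, true_and, mem_filter, mem_univ]
  cases h : M s with
  | none => simp
  | some q => simp [hacc s q h]

end matchVars

def LecFullAbove [Fintype S] (I : SPAST S P L) (M : S → Option P) (s : S) (k : L) : Prop :=
  LecFull I M k ∧ lecAssignees I M k ⊆ I.rivals k s

def ProjFullAbove [Fintype S] (I : SPAST S P L) (M : S → Option P) (s : S) (p : P) : Prop :=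
  ProjFull I M p ∧ projAssignees M p ⊆ I.projRivals p s

section Stability

variable [Fintype S] {I : SPAST S P L} {M : S → Option P}

theorem dcap_le_sum_iff_lecFullAbove [Fintype P] (hM : IsMatching I M) (s : S) (k : L) :
    (I.dcap k : ℤ) ≤ ∑ u ∈ I.rivals k s, ∑ r ∈ univ.filter (fun r => I.lec r = k),
      matchVars M u r ↔ LecFullAbove I M s k := by
  rw [sum_matchVars_lecturer, Nat.cast_le]
  exact le_card_inter_iff (hM.2.2 k)

theorem cap_le_sum_iff_projFullAbove (hM : IsMatching I M) (s : S) (p : P) :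
    (I.cap p : ℤ) ≤ ∑ u ∈ I.projRivals p s, matchVars M u p ↔ ProjFullAbove I M s p := by
  rw [sum_matchVars_project, Nat.cast_le]
  exact le_card_inter_iff (hM.2.1 p)

theorem projAssignees_subset_lecAssignees (p : P) :
    projAssignees M p ⊆ lecAssignees I M (I.lec p) := by
  intro u hu
  simp only [projAssignees, lecAssignees, mem_filter, mem_univ, true_and] at hu ⊢
  exact ⟨p, hu, rfl⟩

theorem notMem_projAssignees_of_wantsToMove {s : S} {p : P} (hw : WantsToMove I M s p) :
    s ∉ projAssignees M p := by
  simp only [projAssignees, mem_filter, mem_univ, true_and]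
  rintro hs
  rcases hw.2 with h | ⟨q, hq, hlt⟩
  · simp [hs] at h
  · obtain rfl : p = q := by simpa [hs] using hq
    exact lt_irrefl _ hlt

theorem not_blocks_iff (hM : IsMatching I M) {s : S} {p : P} (hw : WantsToMove I M s p) :
    ¬ Blocks I M s p ↔ LecFullAbove I M s (I.lec p) ∨ ProjFullAbove I M s p := by
  have hs := notMem_projAssignees_of_wantsToMove hw
  have hsub := projAssignees_subset_lecAssignees (I := I) (M := M) p
  have hacc : ∀ u ∈ projAssignees M p, I.acc u p := fun u hu =>
    hM.1 u p (by simpa [projAssignees] using hu)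
  by_cases hPF : ProjFull I M p
  · simp only [Blocks, hw, hPF, true_and, not_true, false_and, false_or, not_exists,
      not_and, not_lt]
    constructor
    · intro h
      exact Or.inr ⟨hPF, fun u hu => by
        simpa [SPAST.projRivals, hacc u hu, ne_of_mem_of_not_mem hu hs] using h u hu⟩
    · rintro (⟨-, h⟩ | ⟨-, h⟩) u hu
      · exact (mem_filter.mp (h (hsub hu))).2.1
      · exact (mem_filter.mp (h hu)).2.1
  · simp only [Blocks, hw, hPF, true_and, not_false_eq_true, false_and, or_false,
      not_or, not_and, not_exists, not_lt, not_not, ProjFullAbove, LecFullAbove, subset_iff,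
      SPAST.rivals, mem_filter, mem_univ]
    constructor
    · rintro ⟨hLF, h⟩
      exact ⟨hLF, fun u hu => ⟨(h hLF).2 u hu, ne_of_mem_of_not_mem hu (h hLF).1⟩⟩
    · rintro ⟨hLF, h⟩
      exact ⟨hLF, fun _ => ⟨fun hs' => (h hs').2 rfl, fun u hu => (h hu).1⟩⟩

theorem isMatching_of_feasible [Fintype P] {a b : S → P → ℤ} (h : Feasible I (matchVars M) a b) :
    IsMatching I M := by
  obtain ⟨-, -, -, hacc, -, hcap, hdcap, -⟩ := h
  refine ⟨fun s p hsp => ?_, fun p => ?_, fun k => ?_⟩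
  · by_contra hn
    simpa [matchVars, hsp] using hacc s p hn
  · have := hcap p
    rw [sum_matchVars_project, inter_univ] at this
    exact_mod_cast this
  · have := hdcap k
    rw [sum_matchVars_lecturer, inter_univ] at this
    exact_mod_cast this

theorem stable_of_feasible [Fintype P] {a b : S → P → ℤ} (h : Feasible I (matchVars M) a b) :
    Stable I M := by
  have hM := isMatching_of_feasible h
  obtain ⟨-, ha, hb, -, -, -, -, h5, h6, h7⟩ := h
  refine ⟨hM, fun s p hblock => (not_blocks_iff hM hblock.1).2 ?_ hblock⟩
  have hsp := hblock.1.1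
  have hcover : 1 - ∑ r ∈ I.projsAtLeast s p, matchVars M s r ≤ a s p + b s p := h5 s p hsp
  rw [(sum_projsAtLeast_eq_zero_iff M hM.1 hsp).2 hblock.1] at hcover
  rcases ha s p with ha0 | ha1
  · rcases hb s p with hb0 | hb1
    · omega
    · have h7 := h7 s p hsp
      rw [hb1, mul_one] at h7
      exact Or.inr ((cap_le_sum_iff_projFullAbove hM s p).1 h7)
  · have h6 := h6 s p hsp
    rw [ha1, mul_one] at h6
    exact Or.inl ((dcap_le_sum_iff_lecFullAbove hM s _).1 h6)

theorem feasible_of_stable [Fintype P] (h : Stable I M) :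
    Feasible I (matchVars M)
      (fun s p => if LecFullAbove I M s (I.lec p) then 1 else 0)
      (fun s p => if ProjFullAbove I M s p then 1 else 0) := by
  obtain ⟨hM, hstable⟩ := h
  refine ⟨fun s p => ?_, fun s p => ?_, fun s p => ?_, fun s p hsp => ?_, fun s => ?_,
    fun p => ?_, fun k => ?_, fun s p hsp => ?_, fun s p hsp => ?_, fun s p hsp => ?_⟩
  · unfold matchVars; split_ifs <;> simp
  · dsimp only; split_ifs <;> simp
  · dsimp only; split_ifs <;> simp
  · exact if_neg fun h => hsp (hM.1 s p h)
  · rw [sum_matchVars_student]; split_ifs <;> simp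
  · rw [sum_matchVars_project, inter_univ]; exact_mod_cast hM.2.1 p
  · rw [sum_matchVars_lecturer, inter_univ]; exact_mod_cast hM.2.2 k
  · change 1 - ∑ r ∈ I.projsAtLeast s p, matchVars M s r ≤ _
    dsimp only
    by_cases hw : WantsToMove I M s p
    · rw [(sum_projsAtLeast_eq_zero_iff M hM.1 hsp).2 hw]
      rcases (not_blocks_iff hM hw).1 (hstable s p) with h | h <;> simp only [h] <;>
        split_ifs <;> simp
    · have hne := (sum_projsAtLeast_eq_zero_iff M hM.1 hsp).not.2 hw
      have h01 := sum_matchVars_student M (I.projsAtLeast s p) s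
      split_ifs at h01 ⊢ <;> omega
  · dsimp only
    split_ifs with hA
    · rw [mul_one]; exact (dcap_le_sum_iff_lecFullAbove hM s _).2 hA
    · rw [mul_zero]; exact sum_nonneg fun u _ => sum_nonneg fun r _ => matchVars_nonneg M u r
  · dsimp only
    split_ifs with hB
    · rw [mul_one]; exact (cap_le_sum_iff_projFullAbove hM s p).2 hB
    · rw [mul_zero]; exact sum_nonneg fun u _ => matchVars_nonneg M u p

end Stability

/-- The feasible solutions of the IP model `J`, projected to the
`x`-variables, are exactly the stable matchings of `I`: for binary `x` and the
matching `M` given by `M(s_i) = p_j ↔ x_{ij} = 1`, some `(α, β)` makes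
`(x, α, β)` feasible iff `M` is stable. -/
theorem stmt7 [Fintype S] [Fintype P] (I : SPAST S P L)
    (x : S → P → ℤ) (hx : ∀ s p, x s p = 0 ∨ x s p = 1)
    (M : S → Option P) (hMx : ∀ s p, M s = some p ↔ x s p = 1) :
    (∃ a b, Feasible I x a b) ↔ Stable I M := by
  obtain rfl : x = matchVars M := funext₂ fun s p => by
    rcases hx s p with h | h <;> simp [matchVars, hMx, h]
  exact ⟨fun ⟨_, _, h⟩ => stable_of_feasible h, fun h => ⟨_, _, feasible_of_stable h⟩⟩
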